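/- The squared 2-Wasserstein distance between two univariate Gaussian measures N(m, σ²) and N(n, η²) equals (m − n)² + (σ − η)². -/

import Mathlib

open MeasureTheory ProbabilityTheory

/-- Quantile (generalized inverse of the CDF) of a measure on ℝ. -/
noncomputable def quantile (μ : Measure ℝ) (t : ℝ) : ℝ := sInf {x | t ≤ cdf μ x}

/-!
For `t ∈ (0, 1)` the quantile of a probability measure on `ℝ` is characterised by the Galois
connection `quantile μ t ≤ x ↔ t ≤ cdf μ x`. It follows that `quantile μ` pushes the uniform
distribution on `(0, 1)` forward to `μ`, and that the image of `μ` under `y ↦ m + σ y`,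
`σ ≥ 0`, has quantile `m + σ * quantile μ t`. Writing both Gaussians as affine images of `N(0, 1)`, the
integrand becomes `((m - n) + (σ - η) Q t) ^ 2` with `Q` the standard normal quantile, so the
integral is the second moment of `N(m - n, (σ - η) ^ 2)`.
-/

open Set Filter
open scoped NNReal

variable {μ : Measure ℝ}

lemma quantile_eq_of_forall_le_iff {t q : ℝ}
    (h : ∀ x, q ≤ x ↔ t ≤ cdf μ x) : quantile μ t = q := by
  have hset : {x | t ≤ cdf μ x} = Ici q := by
    ext x
    exact (h x).symm
  rw [quantile, hset, csInf_Ici]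

lemma nonempty_setOf_le_cdf {t : ℝ} (ht : t < 1) : {x | t ≤ cdf μ x}.Nonempty :=
  let ⟨x, hx⟩ := ((tendsto_cdf_atTop (μ := μ)).eventually (lt_mem_nhds ht)).exists
  ⟨x, hx.le⟩

lemma bddBelow_setOf_le_cdf {t : ℝ} (ht : 0 < t) : BddBelow {x | t ≤ cdf μ x} := by
  obtain ⟨y, hy⟩ := eventually_atBot.1 ((tendsto_cdf_atBot (μ := μ)).eventually (gt_mem_nhds ht))
  refine ⟨y, fun z hz => ?_⟩
  by_contra! hzy
  exact (hy z hzy.le).not_ge hz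

lemma le_cdf_quantile {t : ℝ} (ht : t ∈ Ioo 0 1) : t ≤ cdf μ (quantile μ t) := by
  have hcont : ContinuousWithinAt (cdf μ) (Ioi (quantile μ t)) (quantile μ t) :=
    ((cdf μ).right_continuous _).mono Ioi_subset_Ici_self
  refine ge_of_tendsto hcont (eventually_nhdsWithin_of_forall fun x hx => ?_)
  obtain ⟨s, hs, hsx⟩ := exists_lt_of_csInf_lt (nonempty_setOf_le_cdf ht.2) hx
  exact hs.trans (monotone_cdf μ hsx.le)

lemma quantile_le_iff {t : ℝ} (ht : t ∈ Ioo 0 1) (x : ℝ) :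
    quantile μ t ≤ x ↔ t ≤ cdf μ x :=
  ⟨fun h => (le_cdf_quantile ht).trans (monotone_cdf μ h),
    fun h => csInf_le (bddBelow_setOf_le_cdf ht.1) h⟩

lemma monotoneOn_quantile : MonotoneOn (quantile μ) (Ioo 0 1) := fun _ ha _ hb hab =>
  (quantile_le_iff ha _).2 (hab.trans (le_cdf_quantile hb))

lemma aemeasurable_quantile : AEMeasurable (quantile μ) (volume.restrict (Ioo 0 1)) :=
  aemeasurable_restrict_of_monotoneOn measurableSet_Ioo monotoneOn_quantile

lemma volume_setOf_mem_Ioo_quantile_le (x : ℝ) :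
    volume {t ∈ Ioo (0 : ℝ) 1 | quantile μ t ≤ x} = ENNReal.ofReal (cdf μ x) := by
  have hset : {t ∈ Ioo (0 : ℝ) 1 | quantile μ t ≤ x} = Ioo 0 1 ∩ Iic (cdf μ x) := by
    ext t
    exact and_congr_right fun ht => quantile_le_iff ht x
  have hae : (Ioo 0 1 ∩ Iic (cdf μ x) : Set ℝ) =ᵐ[volume] (Ioc 0 1 ∩ Iic (cdf μ x) : Set ℝ) :=
    Ioo_ae_eq_Ioc.inter (ae_eq_refl _)
  rw [hset, measure_congr hae, Ioc_inter_Iic, Real.volume_Ioc, min_eq_right (cdf_le_one μ x),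
    sub_zero]

section ProbabilityMeasure

variable [IsProbabilityMeasure μ]

lemma map_quantile_volume_Ioo : (volume.restrict (Ioo (0 : ℝ) 1)).map (quantile μ) = μ := by
  have : IsFiniteMeasure (volume.restrict (Ioo (0 : ℝ) 1)) :=
    ⟨by simp [Real.volume_Ioo]⟩
  refine Measure.ext_of_Iic _ _ fun x => ?_
  rw [Measure.map_apply_of_aemeasurable aemeasurable_quantile measurableSet_Iic,
    Measure.restrict_apply' measurableSet_Ioo, inter_comm, ← ofReal_cdf]
  exact volume_setOf_mem_Ioo_quantile_le x

lemma setIntegral_Ioo_comp_quantile {g : ℝ → ℝ} (hg : AEStronglyMeasurable g μ) :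
    ∫ t in Ioo (0 : ℝ) 1, g (quantile μ t) = ∫ x, g x ∂μ := by
  rw [← map_quantile_volume_Ioo (μ := μ)] at hg ⊢
  rw [integral_map aemeasurable_quantile hg, map_quantile_volume_Ioo]

lemma quantile_map_const_add_mul {m σ t : ℝ} (hσ : 0 ≤ σ) (ht : t ∈ Ioo 0 1) :
    quantile (μ.map fun y => m + σ * y) t = m + σ * quantile μ t := by
  refine quantile_eq_of_forall_le_iff fun x => ?_
  have : IsProbabilityMeasure (μ.map fun y => m + σ * y) :=
    Measure.isProbabilityMeasure_map (by fun_prop)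
  rw [cdf_eq_real, map_measureReal_apply (by fun_prop) measurableSet_Iic]
  rcases hσ.eq_or_lt with rfl | hσ
  · by_cases hmx : m ≤ x <;> simp [hmx, ht.1.not_ge, ht.2.le]
  · have hpre : (fun y => m + σ * y) ⁻¹' Iic x = Iic ((x - m) / σ) := by
      ext y
      simp only [mem_preimage, mem_Iic, le_div_iff₀ hσ]
      constructor <;> intro h <;> linarith
    rw [hpre, ← cdf_eq_real, ← quantile_le_iff ht, le_div_iff₀ hσ]
    constructor <;> intro h <;> linarith

end ProbabilityMeasure

lemma gaussianReal_map_const_add_mul (a b : ℝ) :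
    (gaussianReal 0 1).map (fun x => a + b * x) = gaussianReal a (b ^ 2).toNNReal := by
  have hcomp : (fun x => a + b * x) = (a + ·) ∘ (b * ·) := rfl
  rw [hcomp, ← Measure.map_map (measurable_const_add a) (measurable_const_mul b),
    gaussianReal_map_const_mul, gaussianReal_map_const_add, mul_zero, zero_add, mul_one,
    Real.toNNReal_of_nonneg (sq_nonneg b)]

lemma integral_sq_gaussianReal (μ : ℝ) (v : ℝ≥0) :
    ∫ x, x ^ 2 ∂gaussianReal μ v = μ ^ 2 + v := by
  have h := variance_eq_sub (memLp_id_gaussianReal (μ := μ) (v := v) 2)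
  simp only [variance_id_gaussianReal, id_eq, Pi.pow_apply, integral_id_gaussianReal] at h
  linarith

lemma integral_const_add_mul_sq_gaussianReal (a b : ℝ) :
    ∫ x, (a + b * x) ^ 2 ∂gaussianReal 0 1 = a ^ 2 + b ^ 2 := by
  rw [← integral_map (f := fun y => y ^ 2) (by fun_prop) (by fun_prop),
    gaussianReal_map_const_add_mul, integral_sq_gaussianReal, Real.coe_toNNReal _ (sq_nonneg b)]

/-- the squared 2-Wasserstein distance between N(m,σ²) and N(n,η²),
computed as the integral over (0,1) of the squared difference of quantile functions,
equals (m - n)² + (σ - η)². -/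
theorem w2sq_gaussian (m n σ η : ℝ) (hσ : 0 ≤ σ) (hη : 0 ≤ η) :
    ∫ t in Set.Ioo (0 : ℝ) 1,
        (quantile (gaussianReal m (Real.toNNReal (σ ^ 2))) t -
         quantile (gaussianReal n (Real.toNNReal (η ^ 2))) t) ^ 2
      = (m - n) ^ 2 + (σ - η) ^ 2 := by
  have hdiff : ∀ t ∈ Ioo (0 : ℝ) 1,
      (quantile (gaussianReal m (σ ^ 2).toNNReal) t -
        quantile (gaussianReal n (η ^ 2).toNNReal) t) ^ 2
      = ((m - n) + (σ - η) * quantile (gaussianReal 0 1) t) ^ 2 := fun t ht => by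
    rw [← gaussianReal_map_const_add_mul, ← gaussianReal_map_const_add_mul,
      quantile_map_const_add_mul hσ ht, quantile_map_const_add_mul hη ht]
    ring
  rw [setIntegral_congr_fun measurableSet_Ioo hdiff,
    setIntegral_Ioo_comp_quantile (g := fun x => ((m - n) + (σ - η) * x) ^ 2) (by fun_prop),
    integral_const_add_mul_sq_gaussianReal]
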